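/- Let α be a configuration on N sites whose EBs interact only elastically with each other (i.e., the state sets of the EBs of α are pairwise comparable under inclusion). Then for every state i ∈ Fin n: α ∈ Ω_i if and only if the singleton EB B_i = {i} occurs among the EBs of α. -/

import Mathlib

namespace DensityCA

/-- A configuration on `N` sites with `n` states: a one-dimensional chain
with periodic boundary conditions. -/
abbrev Config (n N : ℕ) := ZMod N → Fin n

/-- The CA map on `N`-site configurations induced by a local rule `f` of radius `r`:
`T_N(α)(j) = f(α(j−r), …, α(j+r))`, indices taken mod `N`. -/
def caStep (n r : ℕ) (f : (Fin (2*r+1) → Fin n) → Fin n) (N : ℕ)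
    (α : Config n N) : Config n N :=
  fun j => f (fun k => α (j + ((k : ℕ) : ZMod N) - ((r : ℕ) : ZMod N)))

/-- The constant configuration with every site in state `i`. -/
def constConfig (n N : ℕ) (i : Fin n) : Config n N := fun _ => i

/-- `c_i(α)`: the number of sites of `α` in state `i`. -/
def countState {n N : ℕ} (i : Fin n) (α : Config n N) : ℕ :=
  ((List.range N).filter (fun j => decide (α (j : ZMod N) = i))).length

/-- `α ∈ Ω_i`: state `i` occurs strictly more often than any other state. -/
def InOmega {n N : ℕ} (i : Fin n) (α : Config n N) : Prop :=
  ∀ j : Fin n, j ≠ i → countState j α < countState i α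

/-- The CA rule induced by `f` classifies `n`-ary density. -/
def Classifies (n r : ℕ) (f : (Fin (2*r+1) → Fin n) → Fin n) : Prop :=
  ∀ (N : ℕ), 1 ≤ N → ∀ (i : Fin n) (α : Config n N),
    InOmega i α → ∃ k : ℕ, (caStep n r f N)^[k] α = constConfig n N i

/-! Elementary blocks -/

/-- `p` is a break (descent) position: the EB containing `p` ends at `p`. -/
def isBreak {n N : ℕ} (α : Config n N) (p : ZMod N) : Prop := α (p + 1) ≤ α p

/-- The list of break positions `j ∈ {0,…,N−1}` (as natural numbers). -/
def breakList {n N : ℕ} (α : Config n N) : List ℕ :=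
  (List.range N).filter (fun j => decide (α ((j : ZMod N) + 1) ≤ α (j : ZMod N)))

/-- The total number of EBs of a configuration. -/
def numEBs {n N : ℕ} (α : Config n N) : ℕ := (breakList α).length

/-- Distance (number of forward steps) from `p` to the end of the EB containing `p`. -/
def blockEndIdx {n N : ℕ} (α : Config n N) (p : ZMod N) : ℕ :=
  ((List.range N).find? (fun (k : ℕ) =>
    decide (α (p + (k : ZMod N) + 1) ≤ α (p + (k : ZMod N))))).getD 0

/-- Distance (number of backward steps) from `p` to the start of the EB containing `p`. -/
def blockStartIdx {n N : ℕ} (α : Config n N) (p : ZMod N) : ℕ :=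
  ((List.range N).find? (fun (k : ℕ) =>
    decide (α (p - (k : ZMod N)) ≤ α (p - (k : ZMod N) - 1)))).getD 0

/-- The last site of the EB containing `p`. -/
def blockEnd {n N : ℕ} (α : Config n N) (p : ZMod N) : ZMod N :=
  p + ((blockEndIdx α p : ℕ) : ZMod N)

/-- The first site of the EB containing `p`. -/
def blockStart {n N : ℕ} (α : Config n N) (p : ZMod N) : ZMod N :=
  p - ((blockStartIdx α p : ℕ) : ZMod N)

/-- The length of the EB containing `p`. -/
def blockLen {n N : ℕ} (α : Config n N) (p : ZMod N) : ℕ :=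
  blockStartIdx α p + blockEndIdx α p + 1

/-- The (strictly increasing) sequence of states of the EB containing `p`. -/
def blockList {n N : ℕ} (α : Config n N) (p : ZMod N) : List (Fin n) :=
  (List.range (blockLen α p)).map (fun t => α (blockStart α p + (t : ZMod N)))

/-- The EB containing `p`, identified with its set of states. -/
def blockSet {n N : ℕ} (α : Config n N) (p : ZMod N) : Finset (Fin n) :=
  (blockList α p).toFinset

/-- The set of sites of the EB containing `p`. -/
def blockSites {n N : ℕ} (α : Config n N) (p : ZMod N) : Finset (ZMod N) :=
  ((List.range (blockLen α p)).map (fun t => blockStart α p + (t : ZMod N))).toFinset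

/-- `S` is a cyclic run of consecutive sites on which `α` is strictly increasing. -/
def IsIncRun {n N : ℕ} (α : Config n N) (S : Finset (ZMod N)) : Prop :=
  ∃ (p : ZMod N) (m : ℕ), 1 ≤ m ∧ m ≤ N ∧
    S = ((List.range m).map (fun t => p + (t : ZMod N))).toFinset ∧
    ∀ t : ℕ, t + 1 < m → α (p + (t : ZMod N)) < α (p + (t : ZMod N) + 1)

/-- `S` is a maximal strictly increasing cyclic run of sites. -/
def IsMaxIncRun {n N : ℕ} (α : Config n N) (S : Finset (ZMod N)) : Prop :=
  IsIncRun α S ∧ ∀ S' : Finset (ZMod N), IsIncRun α S' → S ⊆ S' → S' = S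

/-! The hlex order and interactions of EBs (identified with nonempty subsets of `Fin n`). -/

/-- The strictly increasing list of the states of an EB. -/
def sortedList {n : ℕ} (S : Finset (Fin n)) : List (Fin n) := S.sort (· ≤ ·)

/-- Lexicographic comparison of lists of states. -/
def lexLT {n : ℕ} : List (Fin n) → List (Fin n) → Bool
  | [], [] => false
  | [], _ :: _ => true
  | _ :: _, [] => false
  | a :: as, b :: bs => if a < b then true else if b < a then false else lexLT as bs

/-- hlex: first compare lengths, then compare the increasing state sequences
lexicographically (i.e. at the first index where they differ). -/
def hlexLTb {n : ℕ} (S T : Finset (Fin n)) : Bool :=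
  decide (S.card < T.card) ||
    (decide (S.card = T.card) && lexLT (sortedList S) (sortedList T))

def hlexLEb {n : ℕ} (S T : Finset (Fin n)) : Bool := hlexLTb S T || decide (S = T)

def HlexLE {n : ℕ} (S T : Finset (Fin n)) : Prop := hlexLEb S T = true

/-- Two adjacent EBs `C₁C₂` interact elastically if the greedy interaction
`I(C₁C₂) = D₁D₂` (with `D₁ = C₁ ∪ C₂`, `D₂ = C₁ ∩ C₂`) equals `C₁C₂` or `C₂C₁`
as sequences of states. -/
def Elastic {n : ℕ} (C1 C2 : Finset (Fin n)) : Prop :=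
  sortedList (C1 ∪ C2) ++ sortedList (C1 ∩ C2) = sortedList C1 ++ sortedList C2 ∨
  sortedList (C1 ∪ C2) ++ sortedList (C1 ∩ C2) = sortedList C2 ++ sortedList C1

/-- The `2^n − 1` possible EBs `B_0 <hlex B_1 <hlex ⋯ <hlex B_{2^n−2}`,
listed in increasing hlex order. -/
def allEBs (n : ℕ) : List (Finset (Fin n)) :=
  ((((List.finRange n).sublists.filter (fun l => !l.isEmpty)).map
      (fun l => l.toFinset)).mergeSort (fun S T => hlexLEb S T))

/-- `B_i`, the `i`-th EB in hlex order. -/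
def Bblock (n : ℕ) (i : ℕ) : Finset (Fin n) := (allEBs n).getD i ∅

/-- The greedy interaction `I(C₁C₂) = D₁D₂` on state sequences:
`D₁` is the increasing sequence of `C₁ ∪ C₂`, `D₂` that of `C₁ ∩ C₂`. -/
def interact {n : ℕ} (L1 L2 : List (Fin n)) : List (Fin n) :=
  ((L1 ++ L2).dedup.mergeSort (fun a b => decide (a ≤ b))) ++
    (L1.filter (fun a => decide (a ∈ L2)))

/-- The basic rule `R_i`: every EB equal to `B_i` undergoes the greedy interaction
with its forward neighbouring EB (provided the latter is not `B_i`), all such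
interactions taken in parallel; expressed sitewise. -/
def Rrule {n N : ℕ} (i : ℕ) (α : Config n N) : Config n N := fun p =>
  let Bi := sortedList (Bblock n i)
  let Lk := blockList α p                                -- the EB containing p
  let Lp := blockList α (blockStart α p - 1)             -- the previous EB
  let Ln := blockList α (blockEnd α p + 1)               -- the next EB
  let t := blockStartIdx α p                             -- offset of p in its EB
  if Lk = Bi then
    if Ln = Bi then α p else (interact Lk Ln).getD t (α p)
  else if Lp = Bi then (interact Lp Lk).getD (Lp.length + t) (α p)
  else α p

/-- `R_0 ∘ R_1 ∘ ⋯ ∘ R_m`. -/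
def chainRule {n N : ℕ} (m : ℕ) (α : Config n N) : Config n N :=
  (List.range (m+1)).foldr (fun i β => Rrule i β) α

/-- The affinity rule `A = R_0 ∘ (R_0∘R_1) ∘ (R_0∘R_1∘R_2) ∘ ⋯ ∘ (R_0∘⋯∘R_{2^n−2})`. -/
def Arule {n N : ℕ} (α : Config n N) : Config n N :=
  (List.range (2^n - 1)).foldr (fun m β => chainRule m β) α

/-- The propagation rule `P`: for consecutive EBs `C₁C₂C₃`, the sites of `C₂` are
unchanged unless one of `C₁, C₂, C₃` is a singleton EB `B_i` (`0 ≤ i < n`), in which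
case every site of `C₂` is set to the state of the hlex-least EB among `C₁, C₂, C₃`. -/
def Prule {n N : ℕ} (α : Config n N) : Config n N := fun p =>
  let S1 := blockSet α (blockStart α p - 1)
  let S2 := blockSet α p
  let S3 := blockSet α (blockEnd α p + 1)
  if S1.card = 1 ∨ S2.card = 1 ∨ S3.card = 1 then
    let m12 := if hlexLEb S1 S2 then S1 else S2
    let m := if hlexLEb m12 S3 then m12 else S3
    (sortedList m).headD (α p)
  else α p


section AuxLemmas

lemma find?_range_eq_some (P : ℕ → Bool) {N m : ℕ} (hm : m < N) (hP : P m = true)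
    (hmin : ∀ k < m, P k = false) : (List.range N).find? P = some m := by
  obtain ⟨r, rfl⟩ : ∃ r, N = (m + 1) + r := ⟨N - (m + 1), by omega⟩
  rw [List.range_add, List.find?_append, List.range_succ, List.find?_append]
  have h1 : (List.range m).find? P = none :=
    List.find?_eq_none.mpr (by
      intro x hx
      simp only [List.mem_range] at hx
      simp [hmin x hx])
  rw [h1]
  simp [List.find?, hP]

lemma find?_range_getD_spec (P : ℕ → Bool) {N : ℕ} (h : ∃ m, m < N ∧ P m = true) :
    P (((List.range N).find? P).getD 0) = true ∧
    (∀ k < ((List.range N).find? P).getD 0, P k = false) ∧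
    ((List.range N).find? P).getD 0 < N := by
  obtain ⟨m, hm, hPm⟩ := h
  have hex : ∃ k, P k = true := ⟨m, hPm⟩
  have hm₀ : P (Nat.find hex) = true := Nat.find_spec hex
  have hmin : ∀ k < Nat.find hex, P k = false := fun k hk => by
    have := Nat.find_min hex hk; simpa using this
  have hlt : Nat.find hex < N := lt_of_le_of_lt (Nat.find_le hPm) hm
  rw [find?_range_eq_some P hlt hm₀ hmin]
  exact ⟨hm₀, hmin, hlt⟩

variable {n N : ℕ} (α : Config n N)

lemma exists_break [NeZero N] (hn : 1 ≤ n) : ∃ p : ZMod N, isBreak α p := by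
  haveI : NeZero n := ⟨by omega⟩
  obtain ⟨p, -, hp⟩ := Finset.exists_max_image Finset.univ α ⟨0, Finset.mem_univ 0⟩
  exact ⟨p, hp _ (Finset.mem_univ _)⟩

lemma cast_val_eq {N : ℕ} [NeZero N] (z : ZMod N) : ((z.val : ℕ) : ZMod N) = z := by
  rw [ZMod.natCast_val, ZMod.cast_id]

lemma blockEndIdx_spec [NeZero N] (hn : 1 ≤ n) (p : ZMod N) :
    isBreak α (p + ((blockEndIdx α p : ℕ) : ZMod N)) ∧
    (∀ k < blockEndIdx α p, ¬ isBreak α (p + (k : ZMod N))) ∧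
    blockEndIdx α p < N := by
  obtain ⟨q, hq⟩ := exists_break α hn
  have h : ∃ m, m < N ∧
      (decide (α (p + ((m : ℕ) : ZMod N) + 1) ≤ α (p + ((m : ℕ) : ZMod N)))) = true := by
    refine ⟨(q - p).val, ZMod.val_lt _, ?_⟩
    rw [cast_val_eq]
    simp only [add_sub_cancel]
    exact decide_eq_true hq
  have := find?_range_getD_spec _ h
  unfold blockEndIdx isBreak
  refine ⟨of_decide_eq_true this.1, fun k hk => ?_, this.2.2⟩
  have := this.2.1 k hk
  simpa using of_decide_eq_false this

lemma blockStartIdx_spec [NeZero N] (hn : 1 ≤ n) (p : ZMod N) :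
    isBreak α (p - ((blockStartIdx α p : ℕ) : ZMod N) - 1) ∧
    (∀ k < blockStartIdx α p, ¬ isBreak α (p - (k : ZMod N) - 1)) ∧
    blockStartIdx α p < N := by
  obtain ⟨q, hq⟩ := exists_break α hn
  have h : ∃ m, m < N ∧
      (decide (α (p - ((m : ℕ) : ZMod N)) ≤ α (p - ((m : ℕ) : ZMod N) - 1))) = true := by
    refine ⟨(p - 1 - q).val, ZMod.val_lt _, ?_⟩
    rw [cast_val_eq]
    have h1 : p - (p - 1 - q) = q + 1 := by ring
    have h2 : p - (p - 1 - q) - 1 = q := by ring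
    rw [h2, h1]
    exact decide_eq_true hq
  have := find?_range_getD_spec _ h
  unfold blockStartIdx
  refine ⟨?_, fun k hk => ?_, this.2.2⟩
  · have h1 := of_decide_eq_true this.1
    unfold isBreak
    rwa [sub_add_cancel]
  · have h2 := of_decide_eq_false (this.2.1 k hk)
    intro hb
    unfold isBreak at hb
    rw [sub_add_cancel] at hb
    exact h2 hb

lemma sum_idx_lt [NeZero N] (hn : 1 ≤ n) (p : ZMod N) :
    blockStartIdx α p + blockEndIdx α p < N := by
  obtain ⟨hEb, hEmin, hElt⟩ := blockEndIdx_spec α hn p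
  obtain ⟨hSb, hSmin, hSlt⟩ := blockStartIdx_spec α hn p
  set s := blockStartIdx α p
  set e := blockEndIdx α p
  by_contra hcon
  have hk : N - 1 - e < s := by omega
  apply hSmin _ hk
  have harith : p - ((N - 1 - e : ℕ) : ZMod N) - 1 = p + ((e : ℕ) : ZMod N) := by
    have h1 : ((N - 1 - e : ℕ) : ZMod N) + 1 = ((N - e : ℕ) : ZMod N) := by
      rw [← Nat.cast_add_one]
      congr 1
      omega
    have h2 : ((N - e : ℕ) : ZMod N) = -(e : ZMod N) := by
      rw [Nat.cast_sub (by omega), ZMod.natCast_self]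
      ring
    calc p - ((N - 1 - e : ℕ) : ZMod N) - 1
        = p - (((N - 1 - e : ℕ) : ZMod N) + 1) := by ring
      _ = p - ((N - e : ℕ) : ZMod N) := by rw [h1]
      _ = p + ((e : ℕ) : ZMod N) := by rw [h2]; ring
  rw [harith]
  exact hEb

lemma not_isBreak_inner [NeZero N] (hn : 1 ≤ n) (p : ZMod N) {u : ℕ}
    (hu : u < blockStartIdx α p + blockEndIdx α p) :
    ¬ isBreak α (blockStart α p + (u : ZMod N)) := by
  obtain ⟨hEb, hEmin, hElt⟩ := blockEndIdx_spec α hn p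
  obtain ⟨hSb, hSmin, hSlt⟩ := blockStartIdx_spec α hn p
  set s := blockStartIdx α p with hs
  set e := blockEndIdx α p with he
  unfold blockStart
  rw [← hs]
  by_cases hus : u < s
  · have harith : p - ((s : ℕ) : ZMod N) + ((u : ℕ) : ZMod N)
        = p - ((s - u - 1 : ℕ) : ZMod N) - 1 := by
      have h1 : ((s - u - 1 : ℕ) : ZMod N) + 1 = ((s - u : ℕ) : ZMod N) := by
        rw [← Nat.cast_add_one]; congr 1; omega
      have h2 : ((s - u : ℕ) : ZMod N) = ((s : ℕ) : ZMod N) - ((u : ℕ) : ZMod N) :=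
        Nat.cast_sub (by omega)
      calc p - ((s : ℕ) : ZMod N) + ((u : ℕ) : ZMod N)
          = p - (((s : ℕ) : ZMod N) - ((u : ℕ) : ZMod N)) := by ring
        _ = p - ((s - u : ℕ) : ZMod N) := by rw [h2]
        _ = p - (((s - u - 1 : ℕ) : ZMod N) + 1) := by rw [h1]
        _ = p - ((s - u - 1 : ℕ) : ZMod N) - 1 := by ring
    rw [harith]
    exact hSmin _ (by omega)
  · have harith : p - ((s : ℕ) : ZMod N) + ((u : ℕ) : ZMod N)
        = p + ((u - s : ℕ) : ZMod N) := by
      have h2 : ((u - s : ℕ) : ZMod N) = ((u : ℕ) : ZMod N) - ((s : ℕ) : ZMod N) :=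
        Nat.cast_sub (by omega)
      rw [h2]; ring
    rw [harith]
    exact hEmin _ (by omega)

lemma strictMono_block [NeZero N] (hn : 1 ≤ n) (p : ZMod N) :
    ∀ t₂, t₂ ≤ blockStartIdx α p + blockEndIdx α p → ∀ t₁, t₁ < t₂ →
      α (blockStart α p + (t₁ : ZMod N)) < α (blockStart α p + (t₂ : ZMod N)) := by
  intro t₂
  induction t₂ with
  | zero => omega
  | succ t ih =>
    intro h t₁ h₁
    have hnb := not_isBreak_inner α hn p (u := t) (by omega)
    unfold isBreak at hnb
    have hstep : α (blockStart α p + (t : ZMod N))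
        < α (blockStart α p + ((t + 1 : ℕ) : ZMod N)) := by
      have harith : blockStart α p + ((t + 1 : ℕ) : ZMod N)
          = blockStart α p + (t : ZMod N) + 1 := by push_cast; ring
      rw [harith]
      exact lt_of_not_ge hnb
    rcases Nat.lt_or_ge t₁ t with h2 | h2
    · exact lt_trans (ih (by omega) t₁ h2) hstep
    · have : t₁ = t := by omega
      subst this
      exact hstep

lemma idx_coherence [NeZero N] (hn : 1 ≤ n) (p : ZMod N) {t : ℕ}
    (ht : t ≤ blockStartIdx α p + blockEndIdx α p) :
    blockStartIdx α (blockStart α p + (t : ZMod N)) = t ∧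
    blockEndIdx α (blockStart α p + (t : ZMod N)) = blockStartIdx α p + blockEndIdx α p - t := by
  obtain ⟨hEb, hEmin, hElt⟩ := blockEndIdx_spec α hn p
  obtain ⟨hSb, hSmin, hSlt⟩ := blockStartIdx_spec α hn p
  have hsum := sum_idx_lt α hn p
  set s := blockStartIdx α p with hs
  set e := blockEndIdx α p with he
  set b := blockStart α p with hb
  have hbp : b = p - ((s : ℕ) : ZMod N) := rfl
  have hinner := fun (u : ℕ) (hu : u < s + e) => not_isBreak_inner α hn p (u := u) hu
  rw [← hb] at hinner
  constructor
  · unfold blockStartIdx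
    rw [find?_range_eq_some _ (by omega : t < N) ?_ ?_]
    · rfl
    · apply decide_eq_true
      have h1 : b + ((t : ℕ) : ZMod N) - ((t : ℕ) : ZMod N) = b := by ring
      rw [h1]
      have := hSb
      unfold isBreak at this
      have h3 : p - ((s : ℕ) : ZMod N) - 1 + 1 = b := by rw [hbp]; ring
      have h2 : b - 1 = p - ((s : ℕ) : ZMod N) - 1 := by rw [hbp]
      rw [h2]
      rwa [h3] at this
    · intro k hk
      apply decide_eq_false
      have hc : ((t - k - 1 : ℕ) : ZMod N) = ((t : ℕ) : ZMod N) - ((k : ℕ) : ZMod N) - 1 := by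
        have h4 : t - k - 1 = t - (k + 1) := by omega
        rw [h4, Nat.cast_sub (by omega), Nat.cast_add_one]; ring
      have hnb := hinner (t - k - 1) (by omega)
      unfold isBreak at hnb
      rw [hc] at hnb
      have h5 : b + (((t : ℕ) : ZMod N) - ((k : ℕ) : ZMod N) - 1) + 1
          = b + ((t : ℕ) : ZMod N) - ((k : ℕ) : ZMod N) := by ring
      have h6 : b + (((t : ℕ) : ZMod N) - ((k : ℕ) : ZMod N) - 1)
          = b + ((t : ℕ) : ZMod N) - ((k : ℕ) : ZMod N) - 1 := by ring
      rw [h5, h6] at hnb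
      exact fun hcon => hnb hcon
  · unfold blockEndIdx
    rw [find?_range_eq_some _ (by omega : s + e - t < N) ?_ ?_]
    · rfl
    · apply decide_eq_true
      have hc : ((s + e - t : ℕ) : ZMod N)
          = ((s : ℕ) : ZMod N) + ((e : ℕ) : ZMod N) - ((t : ℕ) : ZMod N) := by
        rw [Nat.cast_sub (by omega), Nat.cast_add]
      have h7 : b + ((t : ℕ) : ZMod N) + ((s + e - t : ℕ) : ZMod N) = p + ((e : ℕ) : ZMod N) := by
        rw [hc, hbp]; ring
      rw [h7]
      exact hEb
    · intro k hk
      apply decide_eq_false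
      have hnb := hinner (t + k) (by omega)
      unfold isBreak at hnb
      have h8 : b + ((t + k : ℕ) : ZMod N) = b + ((t : ℕ) : ZMod N) + ((k : ℕ) : ZMod N) := by
        push_cast; ring
      rw [h8] at hnb
      exact fun hcon => hnb hcon

lemma block_coherence [NeZero N] (hn : 1 ≤ n) (p : ZMod N) {t : ℕ}
    (ht : t ≤ blockStartIdx α p + blockEndIdx α p) :
    blockStart α (blockStart α p + (t : ZMod N)) = blockStart α p ∧
    blockEnd α (blockStart α p + (t : ZMod N)) = blockEnd α p ∧
    blockList α (blockStart α p + (t : ZMod N)) = blockList α p := by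
  obtain ⟨h1, h2⟩ := idx_coherence α hn p ht
  have hdefS : ∀ q : ZMod N, blockStart α q = q - ((blockStartIdx α q : ℕ) : ZMod N) :=
    fun _ => rfl
  have hdefE : ∀ q : ZMod N, blockEnd α q = q + ((blockEndIdx α q : ℕ) : ZMod N) :=
    fun _ => rfl
  have hstart : blockStart α (blockStart α p + (t : ZMod N)) = blockStart α p := by
    rw [hdefS (blockStart α p + (t : ZMod N)), h1]
    ring
  have hlen : blockLen α (blockStart α p + (t : ZMod N)) = blockLen α p := by
    unfold blockLen
    rw [h1, h2]
    omega
  refine ⟨hstart, ?_, ?_⟩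
  · have hc : ((blockStartIdx α p + blockEndIdx α p - t : ℕ) : ZMod N)
        = ((blockStartIdx α p : ℕ) : ZMod N) + ((blockEndIdx α p : ℕ) : ZMod N)
          - ((t : ℕ) : ZMod N) := by
      rw [Nat.cast_sub (by omega), Nat.cast_add]
    rw [hdefE (blockStart α p + (t : ZMod N)), h2, hc, hdefE p, hdefS p]
    ring
  · unfold blockList
    rw [hstart, hlen]

lemma blockStart_add_startIdx [NeZero N] (p : ZMod N) :
    blockStart α p + ((blockStartIdx α p : ℕ) : ZMod N) = p := by
  unfold blockStart; ring

lemma blockEnd_isBreak [NeZero N] (hn : 1 ≤ n) (p : ZMod N) :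
    isBreak α (blockEnd α p) := (blockEndIdx_spec α hn p).1

lemma blockEnd_eq [NeZero N] (p : ZMod N) :
    blockEnd α p = blockStart α p + ((blockStartIdx α p + blockEndIdx α p : ℕ) : ZMod N) := by
  unfold blockEnd blockStart
  push_cast
  ring

lemma blockList_blockEnd [NeZero N] (hn : 1 ≤ n) (p : ZMod N) :
    blockList α (blockEnd α p) = blockList α p ∧
    blockStart α (blockEnd α p) = blockStart α p ∧
    blockStartIdx α (blockEnd α p) = blockStartIdx α p + blockEndIdx α p := by
  have h := block_coherence α hn p (t := blockStartIdx α p + blockEndIdx α p) le_rfl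
  have hi := (idx_coherence α hn p (t := blockStartIdx α p + blockEndIdx α p) le_rfl).1
  rw [← blockEnd_eq] at h hi
  exact ⟨h.2.2, h.1, hi⟩

lemma mem_blockSet_iff [NeZero N] (p : ZMod N) (j : Fin n) :
    j ∈ blockSet α p ↔ ∃ t < blockLen α p, α (blockStart α p + (t : ZMod N)) = j := by
  simp only [blockSet, blockList, bind_pure_comp, List.map_eq_map, List.mem_toFinset,
    List.mem_map, List.mem_range]
  constructor
  · rintro ⟨a, ⟨t, ht, rfl⟩, hj⟩
    exact ⟨t, ht, hj⟩
  · rintro ⟨t, ht, hj⟩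
    exact ⟨(t : ZMod N), ⟨t, ht, rfl⟩, hj⟩

lemma self_mem_blockSet [NeZero N] (p : ZMod N) : α p ∈ blockSet α p := by
  rw [mem_blockSet_iff]
  refine ⟨blockStartIdx α p, by unfold blockLen; omega, ?_⟩
  rw [blockStart_add_startIdx]

lemma blockSet_blockEnd [NeZero N] (hn : 1 ≤ n) (p : ZMod N) :
    blockSet α (blockEnd α p) = blockSet α p := by
  unfold blockSet
  rw [(blockList_blockEnd α hn p).1]

lemma endIdx_of_break [NeZero N] {d : ZMod N} (hd : isBreak α d) : blockEndIdx α d = 0 := by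
  unfold blockEndIdx
  rw [find?_range_eq_some _ (Nat.pos_of_ne_zero (NeZero.ne N)) ?_ (by omega)]
  · rfl
  · apply decide_eq_true
    simpa [isBreak] using hd

lemma blockEnd_of_break [NeZero N] {d : ZMod N} (hd : isBreak α d) : blockEnd α d = d := by
  unfold blockEnd
  rw [endIdx_of_break α hd]
  simp

-- surjectivity
lemma exists_site [NeZero N] (hn : 1 ≤ n) {d : ZMod N} (hd : isBreak α d) {j : Fin n}
    (hj : j ∈ blockSet α d) : ∃ p : ZMod N, α p = j ∧ blockEnd α p = d := by
  rw [mem_blockSet_iff] at hj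
  obtain ⟨t, htl, htj⟩ := hj
  refine ⟨blockStart α d + (t : ZMod N), htj, ?_⟩
  have hle : t ≤ blockStartIdx α d + blockEndIdx α d := by
    unfold blockLen at htl; omega
  rw [(block_coherence α hn d hle).2.1, blockEnd_of_break α hd]

-- injectivity
lemma blockEnd_inj [NeZero N] (hn : 1 ≤ n) {p q : ZMod N}
    (hend : blockEnd α p = blockEnd α q) (hα : α p = α q) : p = q := by
  have hp := blockList_blockEnd α hn p
  have hq := blockList_blockEnd α hn q
  have hb : blockStart α p = blockStart α q := by
    rw [← hp.2.1, ← hq.2.1, hend]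
  have hL : blockStartIdx α p + blockEndIdx α p = blockStartIdx α q + blockEndIdx α q := by
    rw [← hp.2.2, ← hq.2.2, hend]
  have hpe : blockStart α p + ((blockStartIdx α p : ℕ) : ZMod N) = p :=
    blockStart_add_startIdx α p
  have hqe : blockStart α q + ((blockStartIdx α q : ℕ) : ZMod N) = q :=
    blockStart_add_startIdx α q
  rw [← hb] at hqe
  have hαpq : α (blockStart α p + ((blockStartIdx α p : ℕ) : ZMod N))
      = α (blockStart α p + ((blockStartIdx α q : ℕ) : ZMod N)) := by
    rw [hpe, hqe, hα]
  rcases Nat.lt_trichotomy (blockStartIdx α p) (blockStartIdx α q) with h | h | h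
  · exfalso
    have := strictMono_block α hn p (blockStartIdx α q) (by omega) (blockStartIdx α p) h
    rw [hαpq] at this
    exact lt_irrefl _ this
  · rw [← hpe, ← hqe, h]
  · exfalso
    have := strictMono_block α hn p (blockStartIdx α p) (by omega) (blockStartIdx α q) h
    rw [hαpq] at this
    exact lt_irrefl _ this

lemma mem_breakList_iff [NeZero N] (m : ℕ) :
    m ∈ breakList α ↔ m < N ∧ isBreak α (m : ZMod N) := by
  simp [breakList, List.mem_filter, List.mem_range, isBreak]

lemma countState_eq_card [NeZero N] (hn : 1 ≤ n) (j : Fin n) :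
    countState j α
      = (((breakList α).map (fun m : ℕ => (m : ZMod N))).filter
          (fun z => decide (j ∈ blockSet α z))).length := by
  have hnodupL : ((List.range N).map (fun m : ℕ => (m : ZMod N))).Nodup :=
    List.Nodup.map_on (fun x hx y hy h => by
      rw [List.mem_range] at hx hy
      rw [← ZMod.val_cast_of_lt hx, ← ZMod.val_cast_of_lt hy, h]) (@List.nodup_range N)
  have hnodupBL : ((breakList α).map (fun m : ℕ => (m : ZMod N))).Nodup :=
    List.Nodup.map_on (fun x hx y hy h => by
      rw [mem_breakList_iff] at hx hy
      rw [← ZMod.val_cast_of_lt hx.1, ← ZMod.val_cast_of_lt hy.1, h])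
      ((@List.nodup_range N).filter _)
  have hcs : countState j α
      = (((List.range N).map (fun m : ℕ => (m : ZMod N))).filter
          (fun z => decide (α z = j))).length := by
    simp only [countState, bind_pure_comp, List.map_eq_map]
  have nodupA := hnodupL.filter (fun z => decide (α z = j))
  have nodupB := hnodupBL.filter (fun z => decide (j ∈ blockSet α z))
  have hA : ∀ z : ZMod N, z ∈ (((List.range N).map (fun m : ℕ => (m : ZMod N))).filter
      (fun z => decide (α z = j))).toFinset ↔ α z = j := by
    intro z
    simp only [List.mem_toFinset, List.mem_filter, List.mem_map, List.mem_range,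
      decide_eq_true_eq]
    exact ⟨fun h => h.2, fun h => ⟨⟨z.val, ZMod.val_lt z, cast_val_eq z⟩, h⟩⟩
  have hB : ∀ z : ZMod N, z ∈ (((breakList α).map (fun m : ℕ => (m : ZMod N))).filter
      (fun z => decide (j ∈ blockSet α z))).toFinset
      ↔ isBreak α z ∧ j ∈ blockSet α z := by
    intro z
    simp only [List.mem_toFinset, List.mem_filter, List.mem_map, decide_eq_true_eq]
    constructor
    · rintro ⟨⟨m, hm, rfl⟩, h2⟩
      exact ⟨((mem_breakList_iff α m).mp hm).2, h2⟩
    · rintro ⟨h1, h2⟩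
      refine ⟨⟨z.val, ?_, cast_val_eq z⟩, h2⟩
      rw [mem_breakList_iff]
      rw [cast_val_eq]
      exact ⟨ZMod.val_lt z, h1⟩
  rw [hcs, ← List.toFinset_card_of_nodup nodupA, ← List.toFinset_card_of_nodup nodupB]
  apply Finset.card_bij (fun z _ => blockEnd α z)
  · intro z hz
    rw [hA] at hz
    rw [hB]
    refine ⟨blockEnd_isBreak α hn z, ?_⟩
    rw [blockSet_blockEnd α hn z, ← hz]
    exact self_mem_blockSet α z
  · intro z1 h1 z2 h2 hval
    rw [hA] at h1 h2
    exact blockEnd_inj α hn hval (h1.trans h2.symm)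
  · intro d hd
    rw [hB] at hd
    obtain ⟨p, hpj, hpe⟩ := exists_site α hn hd.1 hd.2
    exact ⟨p, (hA p).mpr hpj, hpe⟩

lemma exists_min_chain {β : Type} [DecidableEq β] (f : ℕ → Finset β) :
    ∀ l : List ℕ, l ≠ [] → (∀ a ∈ l, ∀ b ∈ l, f a ⊆ f b ∨ f b ⊆ f a) →
      ∃ d ∈ l, ∀ d' ∈ l, f d ⊆ f d' := by
  intro l
  induction l with
  | nil => intro h; exact absurd rfl h
  | cons a t ih =>
    intro _ hcomp
    by_cases ht : t = []
    · subst ht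
      refine ⟨a, List.mem_cons_self, ?_⟩
      intro d' hd'
      rcases List.mem_cons.mp hd' with rfl | h
      · exact Finset.Subset.refl _
      · simp at h
    · obtain ⟨d, hd, hmin⟩ := ih ht (fun x hx y hy =>
        hcomp x (List.mem_cons_of_mem _ hx) y (List.mem_cons_of_mem _ hy))
      rcases hcomp a (List.mem_cons_self) d (List.mem_cons_of_mem _ hd) with h | h
      · refine ⟨a, List.mem_cons_self, ?_⟩
        intro d' hd'
        rcases List.mem_cons.mp hd' with rfl | h'
        · exact Finset.Subset.refl _
        · exact h.trans (hmin d' h')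
      · refine ⟨d, List.mem_cons_of_mem _ hd, ?_⟩
        intro d' hd'
        rcases List.mem_cons.mp hd' with rfl | h'
        · exact h
        · exact hmin d' h'


end AuxLemmas

/-- If the EBs of `α` interact only elastically (their state sets are
pairwise comparable under inclusion), then `α ∈ Ω_i` iff the singleton EB `{i}` occurs
among the EBs of `α`. -/
theorem omega_iff_singleton_eb
    (n N : ℕ) (hn : 2 ≤ n) (hN : 1 ≤ N) (α : Config n N)
    (helastic : ∀ d1 ∈ breakList α, ∀ d2 ∈ breakList α,
      blockSet α (d1 : ZMod N) ⊆ blockSet α (d2 : ZMod N) ∨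
      blockSet α (d2 : ZMod N) ⊆ blockSet α (d1 : ZMod N))
    (i : Fin n) :
    InOmega i α ↔ ∃ d ∈ breakList α, blockSet α (d : ZMod N) = {i} := by
  haveI : NeZero N := ⟨by omega⟩
  have hn1 : 1 ≤ n := by omega
  have hcnt := countState_eq_card α hn1
  obtain ⟨q, hq⟩ := exists_break α hn1
  have hqmem : q.val ∈ breakList α := (mem_breakList_iff α q.val).mpr
    ⟨ZMod.val_lt q, by rw [cast_val_eq]; exact hq⟩
  have hne : breakList α ≠ [] := List.ne_nil_of_mem hqmem
  obtain ⟨d₀, hd₀, hmin⟩ := exists_min_chain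
    (fun d => blockSet α (d : ZMod N)) (breakList α) hne helastic
  have hK : ∀ j : Fin n, (∀ d ∈ breakList α, j ∈ blockSet α (d : ZMod N)) →
      (((breakList α).map (fun m : ℕ => (m : ZMod N))).filter
        (fun z => decide (j ∈ blockSet α z))).length
      = ((breakList α).map (fun m : ℕ => (m : ZMod N))).length := by
    intro j hj
    rw [List.filter_eq_self.mpr]
    intro z hz
    obtain ⟨m, hm, rfl⟩ := List.mem_map.mp hz
    exact decide_eq_true (hj m hm)
  have hle : ∀ j : Fin n, (((breakList α).map (fun m : ℕ => (m : ZMod N))).filter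
      (fun z => decide (j ∈ blockSet α z))).length
      ≤ ((breakList α).map (fun m : ℕ => (m : ZMod N))).length :=
    fun j => List.length_filter_le _ _
  constructor
  · intro hΩ
    refine ⟨d₀, hd₀, ?_⟩
    have hne0 : (blockSet α (d₀ : ZMod N)).Nonempty := ⟨α d₀, self_mem_blockSet α _⟩
    have hsub : blockSet α (d₀ : ZMod N) ⊆ {i} := by
      intro j hj
      rw [Finset.mem_singleton]
      by_contra hji
      have hjfull := hK j (fun d hd => hmin d hd hj)
      have h1 := hΩ j hji
      rw [hcnt j, hcnt i] at h1
      have h2 := hle i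
      omega
    rcases Finset.subset_singleton_iff.mp hsub with h | h
    · exact absurd h hne0.ne_empty
    · exact h
  · rintro ⟨d, hd, hdi⟩ j hji
    have hifull : ∀ d' ∈ breakList α, i ∈ blockSet α (d' : ZMod N) := by
      intro d' hd'
      rcases helastic d hd d' hd' with h | h
      · exact h (hdi ▸ Finset.mem_singleton_self i)
      · have hne0 : (blockSet α (d' : ZMod N)).Nonempty := ⟨α d', self_mem_blockSet α _⟩
        rw [hdi] at h
        rcases Finset.subset_singleton_iff.mp h with h0 | h0
        · exact absurd h0 hne0.ne_empty
        · rw [h0]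
          exact Finset.mem_singleton_self i
    have hKi := hK i hifull
    have hjlt : (((breakList α).map (fun m : ℕ => (m : ZMod N))).filter
        (fun z => decide (j ∈ blockSet α z))).length
        < ((breakList α).map (fun m : ℕ => (m : ZMod N))).length := by
      rw [List.length_filter_lt_length_iff_exists]
      refine ⟨(d : ZMod N), List.mem_map.mpr ⟨d, hd, rfl⟩, ?_⟩
      simp only [decide_eq_true_eq, hdi, Finset.mem_singleton]
      exact hji
    rw [hcnt j, hcnt i, hKi]
    exact hjlt


end DensityCA
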